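/- arXiv:math/0011167 — 2 statements merged into one kernel-verified Lean document; each statement's English description precedes it below -/
import Mathlib

section
/- For a linear order I with universe (η·λ)·α where η is the order type of ℚ, λ an uncountable cardinal, and α a nonzero ordinal, the quotient of I by the equivalence relation E(x,y) := 'there are fewer than λ elements of I strictly between x and y' is order-isomorphic to (α, ≤). -/
/-!
Send a point of `(η·λ)·α` to the index `β < α` of the copy of `η·λ` containing it. Two points of
the same copy have between them only points whose `λ`-coordinate is bounded by some `γ < λ`, and
there are at most `|γ + 1|·ℵ₀ < λ` of those. Two points of different copies have between them
the whole final segment of the lower copy, which contains `λ` points.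
-/

open Cardinal Set

/-- The linear order of order type `(η·λ)·α`, where `η` is the order type of `ℚ`:
the `α`-fold lexicographic sum of the `λ`-fold lexicographic sum of copies of `ℚ`. -/
def JOrd (lam : Cardinal.{0}) (α : Ordinal.{0}) : Type 1 :=
  {p : Ordinal ×ₗ Ordinal ×ₗ ℚ //
    (ofLex p).1 < α ∧ (ofLex (ofLex p).2).1 < lam.ord}

noncomputable instance (lam : Cardinal.{0}) (α : Ordinal.{0}) : LinearOrder (JOrd lam α) :=
  inferInstanceAs (LinearOrder {p : Ordinal ×ₗ Ordinal ×ₗ ℚ //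
    (ofLex p).1 < α ∧ (ofLex (ofLex p).2).1 < lam.ord})

theorem Cardinal.mk_Iio_toLex_lt {lam : Cardinal.{0}} (hlam : ℵ₀ < lam) {β : Type}
    [Preorder β] [Countable β] {γ : Ordinal.{0}} (hγ : γ < lam.ord) (b : β) :
    #(Iio (toLex (γ, b))) < lift.{1} lam := by
  have hsucc : Order.succ γ < lam.ord := (isSuccLimit_ord hlam.le).succ_lt hγ
  let f : Iio (toLex (γ, b)) → Iio (Order.succ γ) × β := fun p =>
    (⟨(ofLex p.1).1, Order.lt_succ_iff.2 (Prod.Lex.monotone_fst _ _ (mem_Iio.1 p.2).le)⟩,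
      (ofLex p.1).2)
  have hf : Function.Injective f := fun p q hpq => by
    simp only [f, Prod.ext_iff, Subtype.ext_iff] at hpq
    exact Subtype.ext (Prod.ext hpq.1 hpq.2)
  calc #(Iio (toLex (γ, b))) ≤ #(Iio (Order.succ γ) × β) := mk_le_of_injective hf
    _ = lift.{1} ((Order.succ γ).card * #β) := by
      rw [mk_prod, mk_Iio_ordinal, lift_mul, lift_lift]
    _ < lift.{1} lam :=
      lift_lt.2 (mul_lt_of_lt hlam.le (lt_ord.1 hsucc) (mk_le_aleph0.trans_lt hlam))

theorem Set.setOf_between_eq_uIoo {X : Type*} [LinearOrder X] (x y : X) :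
    {z | (x < z ∧ z < y) ∨ (y < z ∧ z < x)} = uIoo x y := by
  ext z
  simp only [uIoo, mem_Ioo, inf_lt_iff, lt_sup_iff]
  grind

namespace JOrd

variable {lam : Cardinal.{0}} {α : Ordinal.{0}}

noncomputable def block (x : JOrd lam α) : Iio α := ⟨(ofLex x.1).1, x.2.1⟩

noncomputable def tail (x : JOrd lam α) : Ordinal.{0} ×ₗ ℚ := (ofLex x.1).2

noncomputable def mk (β : Iio α) (γ : Iio lam.ord) (q : ℚ) : JOrd lam α :=
  ⟨toLex (β.1, toLex (γ.1, q)), β.2, γ.2⟩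

theorem ext {x y : JOrd lam α} (hb : block x = block y) (ht : tail x = tail y) : x = y :=
  Subtype.ext (Prod.ext (congrArg Subtype.val hb) ht)

theorem lt_iff {x y : JOrd lam α} :
    x < y ↔ block x < block y ∨ block x = block y ∧ tail x < tail y := by
  show x.1 < y.1 ↔ _
  rw [Prod.Lex.lt_iff, Subtype.ext_iff]
  rfl

theorem block_mono : Monotone (block : JOrd lam α → Iio α) :=
  fun _ _ h => Prod.Lex.monotone_fst _ _ h

theorem block_surjective (hlam : lam ≠ 0) : Function.Surjective (block : JOrd lam α → Iio α) :=
  fun β => ⟨mk β ⟨0, ord_pos.2 (pos_iff_ne_zero.2 hlam)⟩ 0, rfl⟩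

theorem mk_Ioo_lt_of_block_eq (hlam : ℵ₀ < lam) {x y : JOrd lam α} (h : block x = block y) :
    #(Ioo x y) < lift.{1} lam := by
  have hblock : ∀ z ∈ Ioo x y, block z = block y := fun z hz =>
    le_antisymm (block_mono hz.2.le) (h ▸ block_mono hz.1.le)
  have hinj : InjOn tail (Ioo x y) := fun z hz z' hz' ht =>
    ext ((hblock z hz).trans (hblock z' hz').symm) ht
  have hsub : tail '' Ioo x y ⊆ Iio (tail y) := by
    rintro _ ⟨z, hz, rfl⟩
    exact ((lt_iff.1 hz.2).resolve_left (hblock z hz).not_lt).2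
  rw [← mk_image_eq_of_injOn _ _ hinj]
  exact (mk_le_mk_of_subset hsub).trans_lt (mk_Iio_toLex_lt hlam y.2.2 _)

theorem lift_le_mk_Ioo_of_block_lt (hlam : ℵ₀ < lam) {x y : JOrd lam α}
    (h : block x < block y) : lift.{1} lam ≤ #(Ioo x y) := by
  set δ := (ofLex (tail x)).1
  have hδ : Order.succ δ < lam.ord := (isSuccLimit_ord hlam.le).succ_lt x.2.2
  have hmem (γ : Iio lam.ord) : Order.succ δ + γ < lam.ord :=
    Ordinal.isPrincipal_add_ord hlam.le hδ γ.2
  let f : Iio lam.ord → Ioo x y := fun γ =>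
    ⟨mk (block x) ⟨Order.succ δ + γ, hmem γ⟩ 0,
      lt_iff.2 <| .inr ⟨rfl, Prod.Lex.lt_iff.2 <| .inl <| (Order.lt_succ δ).trans_le le_self_add⟩,
      lt_iff.2 (Or.inl h)⟩
  have hf : Function.Injective f := fun γ γ' hγ =>
    Subtype.ext (add_left_cancel (congrArg (fun z : Ioo x y => (ofLex (tail z.1)).1) hγ))
  calc lift.{1} lam = #(Iio lam.ord) := by rw [mk_Iio_ordinal, card_ord]
    _ ≤ #(Ioo x y) := mk_le_of_injective hf

theorem block_eq_iff_mk_Ioo_lt (hlam : ℵ₀ < lam) {x y : JOrd lam α} (hxy : x ≤ y) :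
    block x = block y ↔ #(Ioo x y) < lift.{1} lam :=
  ⟨mk_Ioo_lt_of_block_eq hlam, fun hlt => by_contra fun hne =>
    (lift_le_mk_Ioo_of_block_lt hlam ((block_mono hxy).lt_of_ne hne)).not_gt hlt⟩

end JOrd

theorem JOrd_quotient_iso_general (lam : Cardinal.{0}) (hlam : Cardinal.aleph0 < lam)
    (α : Ordinal.{0}) :
    ∃ g : JOrd lam α → ↥(Set.Iio α),
      Function.Surjective g ∧
      (∀ x y : JOrd lam α, x ≤ y → g x ≤ g y) ∧
      ∀ x y : JOrd lam α, g x = g y ↔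
        Cardinal.mk {z : JOrd lam α | (x < z ∧ z < y) ∨ (y < z ∧ z < x)} <
          Cardinal.lift.{1, 0} lam := by
  refine ⟨JOrd.block, JOrd.block_surjective (aleph0_pos.trans hlam).ne',
    fun x y h => JOrd.block_mono h, fun x y => ?_⟩
  rw [setOf_between_eq_uIoo]
  rcases le_total x y with h | h
  · rw [uIoo_of_le h]
    exact JOrd.block_eq_iff_mk_Ioo_lt hlam h
  · rw [uIoo_of_ge h, eq_comm]
    exact JOrd.block_eq_iff_mk_Ioo_lt hlam h

/-- The quotient of `(η·λ)·α` by the convex equivalence relation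
`E(x,y) ⟺ "fewer than λ elements lie strictly between x and y"` is order-isomorphic to
`(α, ≤)`: there is a monotone surjection onto `α` whose fibers are exactly the `E`-classes. -/
theorem JOrd_quotient_iso (lam : Cardinal.{0}) (hlam : Cardinal.aleph0 < lam)
    (α : Ordinal.{0}) (hα : α ≠ 0) :
    ∃ g : JOrd lam α → ↥(Set.Iio α),
      Function.Surjective g ∧
      (∀ x y : JOrd lam α, x ≤ y → g x ≤ g y) ∧
      ∀ x y : JOrd lam α, g x = g y ↔
        Cardinal.mk {z : JOrd lam α | (x < z ∧ z < y) ∨ (y < z ∧ z < x)} <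
          Cardinal.lift.{1, 0} lam :=
  JOrd_quotient_iso_general lam hlam α
end

section
/- Gluing strong maps: let α ≥ 1, I and J be dense linear orders, D ⊆ Ī (Dedekind completion) with {−∞, +∞} ⊆ D, and f : D → J̄ an α-strong proper function. Suppose for each D-cut ν there is a set E_ν ⊆ the completion of I(ν) and an α-strong proper function g_ν : E_ν → the completion of J(f(ν)). Then f ∪ ⋃_ν g_ν is a proper α-strong function. -/
open FirstOrder Cardinal Set

universe u

/-- `G` is the graph of a partial elementary map from `M` to `N`. -/
def IsPartialElem (L : FirstOrder.Language) (M N : Type u) [L.Structure M] [L.Structure N]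
    (G : Set (M × N)) : Prop :=
  ∀ (n : ℕ) (φ : L.Formula (Fin n)) (v : Fin n → M × N),
    (∀ i, v i ∈ G) → (φ.Realize (fun i => (v i).1) ↔ φ.Realize (fun i => (v i).2))

/-- `G` belongs to `ℱ_λ(M,N)`: a partial elementary map of domain size `< λ`. -/
def InF (L : FirstOrder.Language) (M N : Type u) [L.Structure M] [L.Structure N]
    (lam : Cardinal.{u}) (G : Set (M × N)) : Prop :=
  IsPartialElem L M N G ∧ Cardinal.mk G < lam

/-- `RankGe L M N lam α G` means `Rank(G) ≥ α` in the sense of Karp complexity: `Rank(f) ≥ 0`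
always, `Rank(f) ≥ α` for limit `α` iff `Rank(f) ≥ β` for all `β < α`, and `Rank(f) ≥ β + 1`
iff every subset of size `< λ` of either side can be absorbed into an extension of `f` in
`ℱ_λ(M,N)` of rank `≥ β`. -/
noncomputable def RankGe (L : FirstOrder.Language) (M N : Type u)
    [L.Structure M] [L.Structure N] (lam : Cardinal.{u}) :
    Ordinal → Set (M × N) → Prop :=
  Ordinal.lt_wf.fix fun α IH G =>
    ∀ β (h : β < α),
      (∀ C : Set M, Cardinal.mk C < lam →
        ∃ G', InF L M N lam G' ∧ G ⊆ G' ∧ C ⊆ Prod.fst '' G' ∧ IH β h G') ∧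
      (∀ C : Set N, Cardinal.mk C < lam →
        ∃ G', InF L M N lam G' ∧ G ⊆ G' ∧ C ⊆ Prod.snd '' G' ∧ IH β h G')

/-- The members of the Dedekind completion of `I` (including the endpoints `-∞ = ∅` and
`+∞ = univ`): downward-closed subsets with no largest element. -/
def Cuts (I : Type u) [LinearOrder I] : Set (Set I) :=
  {A | IsLowerSet A ∧ ∀ a ∈ A, ∃ b ∈ A, a < b}

/-- `(Dm, Dp)` is a `D`-cut: a partition of `D` into a downward-closed part and its
complement. -/
def IsCutOf {I : Type u} (Dm Dp D : Set (Set I)) : Prop :=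
  Dm ∪ Dp = D ∧ Disjoint Dm Dp ∧ ∀ A ∈ Dm, ∀ B ∈ D, B ⊆ A → B ∈ Dm

/-- The interval `I(ν) = {x ∈ I : Dm < x < Dp}` of a cut `ν = (Dm, Dp)`. -/
def Iv {I : Type u} [LinearOrder I] (Dm Dp : Set (Set I)) : Set I :=
  {x | (∀ A ∈ Dm, A ⊂ Set.Iio x) ∧ ∀ B ∈ Dp, Set.Iio x ⊂ B}

/-- The corresponding interval `J(f(ν))` on the target side. -/
def Jv {I J : Type u} [LinearOrder I] [LinearOrder J] (f : Set I → Set J)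
    (Dm Dp : Set (Set I)) : Set J :=
  {y | (∀ A ∈ Dm, f A ⊂ Set.Iio y) ∧ ∀ B ∈ Dp, Set.Iio y ⊂ f B}

/-- The core conditions for a proper function with domain `D`: it maps cuts to cuts, is
order-preserving (and strictly so), continuous (preserves existing suprema and infima), and
sends points of `I` exactly to points of `J`. -/
def ProperCore {I J : Type u} [LinearOrder I] [LinearOrder J]
    (f : Set I → Set J) (D : Set (Set I)) : Prop :=
  D ⊆ Cuts I ∧ (∀ A ∈ D, f A ∈ Cuts J) ∧
    (∀ A ∈ D, ∀ B ∈ D, A ⊆ B → f A ⊆ f B) ∧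
    (∀ A ∈ D, ∀ B ∈ D, A ⊂ B → f A ⊂ f B) ∧
    (∀ S : Set (Set I), S ⊆ D → ∀ A ∈ D, IsLUB S A → IsLUB (f '' S) (f A)) ∧
    (∀ S : Set (Set I), S ⊆ D → ∀ A ∈ D, IsGLB S A → IsGLB (f '' S) (f A)) ∧
    ∀ A ∈ D, (∃ x : I, A = Set.Iio x) ↔ (∃ y : J, f A = Set.Iio y)

/-- A proper function: the core conditions together with `f(-∞) = -∞` and `f(+∞) = +∞`. -/
def ProperOn {I J : Type u} [LinearOrder I] [LinearOrder J]
    (f : Set I → Set J) (D : Set (Set I)) : Prop :=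
  ProperCore f D ∧ (∅ : Set I) ∈ D ∧ (Set.univ : Set I) ∈ D ∧
    f ∅ = (∅ : Set J) ∧ f Set.univ = (Set.univ : Set J)

/-- `f` is `α`-strong: for every `D`-cut `ν`, the linear orders `I(ν)` and `J(f(ν))` are
`(μ⁺, α)`-equivalent, i.e. elementarily equivalent with the empty partial map of Rank `≥ α`
in `ℱ_{μ⁺}(I(ν), J(f(ν)))`. -/
def StrongOn (mu : Cardinal.{u}) {I J : Type u} [LinearOrder I] [LinearOrder J]
    (f : Set I → Set J) (D : Set (Set I)) (α : Ordinal) : Prop :=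
  ∀ Dm Dp : Set (Set I), IsCutOf Dm Dp D →
    let iS : FirstOrder.Language.order.Structure ↥(Iv Dm Dp) :=
      FirstOrder.Language.orderStructure ↥(Iv Dm Dp)
    let jS : FirstOrder.Language.order.Structure ↥(Jv f Dm Dp) :=
      FirstOrder.Language.orderStructure ↥(Jv f Dm Dp)
    @FirstOrder.Language.ElementarilyEquivalent FirstOrder.Language.order
        ↥(Iv Dm Dp) ↥(Jv f Dm Dp) iS jS ∧
      @RankGe FirstOrder.Language.order ↥(Iv Dm Dp) ↥(Jv f Dm Dp) iS jS
        (Order.succ mu) α ∅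

/-- The bottom of the completion of the interval of the cut `(Dm, Dp)`. -/
def cutLo {I : Type u} (Dm : Set (Set I)) : Set I := ⋃₀ Dm

/-- The top of the completion of the interval of the cut `(Dm, Dp)`. -/
def cutHi {I : Type u} [LinearOrder I] (Dm Dp : Set (Set I)) : Set I :=
  ⋃₀ Dm ∪ {x : I | ∃ y ∈ Iv Dm Dp, x ≤ y}

section Aux

lemma rankGe_iff (L : FirstOrder.Language) (M N : Type u) [L.Structure M] [L.Structure N]
    (lam : Cardinal.{u}) (α : Ordinal) (G : Set (M × N)) :
    RankGe L M N lam α G ↔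
    ∀ β (_ : β < α),
      (∀ C : Set M, Cardinal.mk C < lam →
        ∃ G', InF L M N lam G' ∧ G ⊆ G' ∧ C ⊆ Prod.fst '' G' ∧ RankGe L M N lam β G') ∧
      (∀ C : Set N, Cardinal.mk C < lam →
        ∃ G', InF L M N lam G' ∧ G ⊆ G' ∧ C ⊆ Prod.snd '' G' ∧ RankGe L M N lam β G') := by
  unfold RankGe
  rw [WellFounded.fix_eq]

/-- an order-language equivalence between two empty structures -/
noncomputable def emptyLEquiv (M N : Type u) [Language.order.Structure M]
    [Language.order.Structure N] [IsEmpty M] [IsEmpty N] : M ≃[Language.order] N where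
  toEquiv := Equiv.equivOfIsEmpty M N
  map_fun' := fun {n} f _ => isEmptyElim f
  map_rel' := fun {n} r x => by
    match n, r with
    | 2, .le => exact isEmptyElim (x 0)

lemma isPartialElem_empty_of_isEmpty (M N : Type u) [Language.order.Structure M]
    [Language.order.Structure N] [IsEmpty M] [IsEmpty N] :
    IsPartialElem Language.order M N (∅ : Set (M × N)) := by
  intro n φ v hv
  cases n with
  | zero =>
    have h2 : (fun i => (v i).2) = ((emptyLEquiv M N) ∘ fun i => (v i).1) :=
      funext fun i => i.elim0
    rw [h2]
    exact (Language.StrongHomClass.realize_formula (emptyLEquiv M N) φ).symm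
  | succ k => exact absurd (hv 0) (Set.notMem_empty _)

lemma rankGe_of_isEmpty (M N : Type u) [Language.order.Structure M] [Language.order.Structure N]
    [IsEmpty M] [IsEmpty N] (lam : Cardinal.{u}) (hlam : 0 < lam) (α : Ordinal) :
    RankGe Language.order M N lam α (∅ : Set (M × N)) := by
  induction α using Ordinal.induction with
  | h α IH =>
    rw [rankGe_iff]
    intro β hβ
    have hpe := isPartialElem_empty_of_isEmpty M N
    have hmk : Cardinal.mk (∅ : Set (M × N)) < lam := by simpa using hlam
    constructor
    · intro C hC
      refine ⟨∅, ⟨hpe, hmk⟩, le_refl _, ?_, IH β hβ⟩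
      have : C = ∅ := Set.eq_empty_of_isEmpty C
      simp [this]
    · intro C hC
      refine ⟨∅, ⟨hpe, hmk⟩, le_refl _, ?_, IH β hβ⟩
      have : C = ∅ := Set.eq_empty_of_isEmpty C
      simp [this]

end Aux

section OrderAux
set_option linter.unusedSectionVars false
set_option linter.unusedVariables false

variable {I : Type u} [LinearOrder I]

lemma lower_subset_Iio {B : Set I} {z : I} (hB : IsLowerSet B) (hz : z ∉ B) :
    B ⊆ Set.Iio z := fun u hu =>
  lt_of_not_ge fun hle => hz (hB hle hu)

lemma mem_of_Iio_ssubset {B : Set I} {z : I} (hB : IsLowerSet B) (hss : Set.Iio z ⊂ B) :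
    z ∈ B := by
  obtain ⟨u, hu, hnu⟩ := exists_of_ssubset hss
  exact hB (not_lt.mp (by simpa using hnu)) hu

lemma sub_of_sub_ssub {A B C : Set I} (h1 : A ⊆ B) (h2 : B ⊂ C) : A ⊂ C :=
  lt_of_le_of_lt h1 h2

lemma ssub_of_ssub_sub {A B C : Set I} (h1 : A ⊂ B) (h2 : B ⊆ C) : A ⊂ C :=
  lt_of_lt_of_le h1 h2

lemma hiBound {P Q : Set (Set I)} {A : Set I} (hA : A ∈ Cuts I)
    (hP : ∀ B ∈ P, IsLowerSet B) (hQl : ∀ B ∈ Q, IsLowerSet B) (hQ : ∀ B ∈ Q, A ⊆ B) :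
    A ⊆ ⋃₀ P ∪ {x | ∃ y, ((∀ B ∈ P, B ⊂ Set.Iio y) ∧ ∀ B ∈ Q, Set.Iio y ⊂ B) ∧ x ≤ y} := by
  intro t ht
  by_contra hcon
  have htP : t ∉ ⋃₀ P := fun hm => hcon (Or.inl hm)
  have hno : ¬ ∃ y, ((∀ B ∈ P, B ⊂ Set.Iio y) ∧ ∀ B ∈ Q, Set.Iio y ⊂ B) ∧ t ≤ y :=
    fun hy => hcon (Or.inr hy)
  obtain ⟨t', ht', htt'⟩ := hA.2 t ht
  have ht'P : t' ∉ ⋃₀ P := by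
    rintro ⟨B, hB, htB⟩
    exact htP ⟨B, hB, hP B hB htt'.le htB⟩
  refine hno ⟨t', ⟨fun B hB => ?_, fun B hB => ?_⟩, htt'.le⟩
  · refine (lower_subset_Iio (hP B hB) (fun hm => ht'P ⟨B, hB, hm⟩)).ssubset_of_ne fun he => ?_
    exact htP ⟨B, hB, he ▸ htt'⟩
  · have htB : t' ∈ B := hQ B hB ht'
    have hsub2 : Set.Iio t' ⊆ B := fun u hu => hQl B hB hu.le htB
    refine hsub2.ssubset_of_ne fun he => ?_
    rw [← he] at htB
    exact absurd htB (lt_irrefl t')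

lemma cut_dm_subset {Dm Dp D : Set (Set I)} (hcut : IsCutOf Dm Dp D) : Dm ⊆ D :=
  hcut.1 ▸ Set.subset_union_left

lemma cut_dp_subset {Dm Dp D : Set (Set I)} (hcut : IsCutOf Dm Dp D) : Dp ⊆ D :=
  hcut.1 ▸ Set.subset_union_right

lemma cut_ssub {Dm Dp D : Set (Set I)} (hD : D ⊆ Cuts I) (hcut : IsCutOf Dm Dp D)
    {A B : Set I} (hA : A ∈ Dm) (hB : B ∈ Dp) : A ⊂ B := by
  have hAD := cut_dm_subset hcut hA
  have hBD := cut_dp_subset hcut hB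
  have hne : A ≠ B := fun he =>
    Set.disjoint_left.mp hcut.2.1 hA (he ▸ hB)
  rcases (hD hAD).1.total (hD hBD).1 with hs | hs
  · exact hs.ssubset_of_ne hne
  · exact absurd (hcut.2.2 A hA B hBD hs) fun hm => Set.disjoint_left.mp hcut.2.1 hm hB

lemma hi_subset_dp {Dm Dp D : Set (Set I)} (hD : D ⊆ Cuts I) (hcut : IsCutOf Dm Dp D)
    {B : Set I} (hB : B ∈ Dp) : cutHi Dm Dp ⊆ B := by
  rintro t (⟨A, hA, htA⟩ | ⟨z, hz, htz⟩)
  · exact (cut_ssub hD hcut hA hB).1 htA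
  · exact (hD (cut_dp_subset hcut hB)).1 htz (mem_of_Iio_ssubset (hD (cut_dp_subset hcut hB)).1 (hz.2 B hB))

lemma lo_subset_hi {Dm Dp : Set (Set I)} : cutLo Dm ⊆ cutHi Dm Dp :=
  Set.subset_union_left

lemma mk_cut {D Dm : Set (Set I)} (hsub : Dm ⊆ D)
    (hdc : ∀ A ∈ Dm, ∀ B ∈ D, B ⊆ A → B ∈ Dm) : IsCutOf Dm (D \ Dm) D := by
  refine ⟨by rw [Set.union_diff_cancel' (le_refl _) hsub], Set.disjoint_sdiff_right, hdc⟩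

lemma cut_dp_eq {Dm Dp D : Set (Set I)} (hcut : IsCutOf Dm Dp D) : Dp = D \ Dm := by
  ext B
  constructor
  · intro hB
    exact ⟨cut_dp_subset hcut hB, fun hm => Set.disjoint_left.mp hcut.2.1 hm hB⟩
  · rintro ⟨hBD, hBm⟩
    rcases (hcut.1 ▸ hBD : B ∈ Dm ∪ Dp) with hm | hp
    · exact absurd hm hBm
    · exact hp

lemma cuts_total {Dm1 Dp1 Dm2 Dp2 D : Set (Set I)} (hD : D ⊆ Cuts I)
    (h1 : IsCutOf Dm1 Dp1 D) (h2 : IsCutOf Dm2 Dp2 D) : Dm1 ⊆ Dm2 ∨ Dm2 ⊆ Dm1 := by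
  by_cases hs : Dm1 ⊆ Dm2
  · exact Or.inl hs
  · right
    obtain ⟨B, hB1, hB2⟩ := Set.not_subset.mp hs
    have hBp2 : B ∈ Dp2 := by
      rcases (h2.1 ▸ cut_dm_subset h1 hB1 : B ∈ Dm2 ∪ Dp2) with hm | hp
      · exact absurd hm hB2
      · exact hp
    intro C hC
    rcases (hD (cut_dm_subset h2 hC)).1.total (hD (cut_dm_subset h1 hB1)).1 with hs' | hs'
    · exact h1.2.2 B hB1 C (cut_dm_subset h2 hC) hs'
    · exact absurd (h2.2.2 C hC B (cut_dm_subset h1 hB1) hs') fun hm =>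
        Set.disjoint_left.mp h2.2.1 hm hBp2

lemma cutHi_lower {D Dm Dp : Set (Set I)} (hD : D ⊆ Cuts I) (hcut : IsCutOf Dm Dp D) :
    IsLowerSet (cutHi Dm Dp) := by
  rintro a b hba (⟨A, hA, haA⟩ | ⟨z, hz, haz⟩)
  · exact Or.inl ⟨A, hA, (hD (cut_dm_subset hcut hA)).1 hba haA⟩
  · exact Or.inr ⟨z, hz, hba.trans haz⟩

end OrderAux

section Glue
set_option linter.unusedSectionVars false
set_option linter.unusedVariables false

variable {I J : Type u} [LinearOrder I] [LinearOrder J]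

/-- The top of the completion of the image interval. -/
def hiJset (f : Set I → Set J) (Dm Dp : Set (Set I)) : Set J :=
  ⋃₀ (f '' Dm) ∪ {y : J | ∃ z ∈ Jv f Dm Dp, y ≤ z}

variable {f : Set I → Set J} {D : Set (Set I)}
  {E : Set (Set I) → Set (Set I) → Set (Set I)}
  {g : Set (Set I) → Set (Set I) → Set I → Set J} {h : Set I → Set J}

lemma hiJ_subset_dp (hf : ProperOn f D) {Dm Dp : Set (Set I)} (hcut : IsCutOf Dm Dp D)
    {B : Set I} (hB : B ∈ Dp) : hiJset f Dm Dp ⊆ f B := by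
  obtain ⟨⟨hD, hfc, hmono, hstrict, hlub, hglb, hprin⟩, h0, h1, hf0, hf1⟩ := id hf
  rintro t (⟨FA, ⟨A, hA, rfl⟩, htA⟩ | ⟨z, hz, htz⟩)
  · exact (hmono A (cut_dm_subset hcut hA) B (cut_dp_subset hcut hB)
      (cut_ssub hD hcut hA hB).1) htA
  · have hzB : z ∈ f B := mem_of_Iio_ssubset (hfc B (cut_dp_subset hcut hB)).1 (hz.2 B hB)
    exact (hfc B (cut_dp_subset hcut hB)).1 htz hzB

lemma subset_hiJ (hf : ProperOn f D) {Dm Dp : Set (Set I)} (hcut : IsCutOf Dm Dp D)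
    {A : Set J} (hA : A ∈ Cuts J) (hQ : ∀ B ∈ Dp, A ⊆ f B) : A ⊆ hiJset f Dm Dp := by
  obtain ⟨⟨hD, hfc, hmono, hstrict, hlub, hglb, hprin⟩, h0, h1, hf0, hf1⟩ := id hf
  have := hiBound (P := f '' Dm) (Q := f '' Dp) hA
    (by rintro B ⟨A', hA', rfl⟩; exact (hfc A' (cut_dm_subset hcut hA')).1)
    (by rintro B ⟨A', hA', rfl⟩; exact (hfc A' (cut_dp_subset hcut hA')).1)
    (by rintro B ⟨A', hA', rfl⟩; exact hQ A' hA')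
  refine subset_trans this ?_
  apply Set.union_subset_union (subset_refl _)
  rintro x ⟨y, ⟨hy1, hy2⟩, hxy⟩
  exact ⟨y, ⟨fun A' hA' => hy1 (f A') ⟨A', hA', rfl⟩, fun B hB => hy2 (f B) ⟨B, hB, rfl⟩⟩, hxy⟩

lemma subset_cutHi {Dm Dp D : Set (Set I)} (hD : D ⊆ Cuts I) (hcut : IsCutOf Dm Dp D)
    {A : Set I} (hA : A ∈ Cuts I) (hQ : ∀ B ∈ Dp, A ⊆ B) : A ⊆ cutHi Dm Dp := by
  have := hiBound (P := Dm) (Q := Dp) hA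
    (fun B hB => (hD (cut_dm_subset hcut hB)).1)
    (fun B hB => (hD (cut_dp_subset hcut hB)).1) hQ
  refine subset_trans this (Set.union_subset_union (subset_refl _) ?_)
  rintro x ⟨y, ⟨hy1, hy2⟩, hxy⟩
  exact ⟨y, ⟨hy1, hy2⟩, hxy⟩

/-- if `C ∈ Dm` is also in `E`, then `C` is the max of `Dm`, i.e. equals `cutLo`. -/
lemma eq_cutLo (hE : ∀ Dm Dp : Set (Set I), IsCutOf Dm Dp D →
      ∀ A ∈ E Dm Dp, A ∈ Cuts I ∧ (∀ B ∈ Dm, B ⊆ A) ∧ ∀ B ∈ Dp, A ⊆ B)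
    {Dm Dp : Set (Set I)} (hcut : IsCutOf Dm Dp D) {C : Set I}
    (hCE : C ∈ E Dm Dp) (hCm : C ∈ Dm) : C = cutLo Dm := by
  apply subset_antisymm
  · exact fun t ht => ⟨C, hCm, ht⟩
  · exact Set.sUnion_subset fun B hB => (hE Dm Dp hcut C hCE).2.1 B hB

lemma f_cutLo (hf : ProperOn f D) {Dm Dp : Set (Set I)} (hcut : IsCutOf Dm Dp D)
    {C : Set I} (hCm : C ∈ Dm) (hmax : ∀ B ∈ Dm, B ⊆ C) : f C = ⋃₀ (f '' Dm) := by
  obtain ⟨⟨hD, hfc, hmono, hstrict, hlub, hglb, hprin⟩, h0, h1, hf0, hf1⟩ := id hf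
  apply subset_antisymm
  · exact fun t ht => ⟨f C, ⟨C, hCm, rfl⟩, ht⟩
  · apply Set.sUnion_subset
    rintro FB ⟨B, hB, rfl⟩
    exact hmono B (cut_dm_subset hcut hB) C (cut_dm_subset hcut hCm) (hmax B hB)

lemma eq_cutHi (hD : D ⊆ Cuts I) {Dm Dp : Set (Set I)} (hcut : IsCutOf Dm Dp D)
    {C : Set I} (hC : C ∈ Cuts I) (hmin : ∀ B ∈ Dp, C ⊆ B) (hCp : C ∈ Dp) :
    C = cutHi Dm Dp :=
  subset_antisymm (subset_cutHi hD hcut hC hmin) (hi_subset_dp hD hcut hCp)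

lemma f_cutHi (hf : ProperOn f D) {Dm Dp : Set (Set I)} (hcut : IsCutOf Dm Dp D)
    {C : Set I} (hCp : C ∈ Dp) (hmin : ∀ B ∈ Dp, C ⊆ B) : f C = hiJset f Dm Dp := by
  obtain ⟨⟨hD, hfc, hmono, hstrict, hlub, hglb, hprin⟩, h0, h1, hf0, hf1⟩ := id hf
  apply subset_antisymm
  · exact subset_hiJ hf hcut (hfc C (cut_dp_subset hcut hCp)) fun B hB =>
      hmono C (cut_dp_subset hcut hCp) B (cut_dp_subset hcut hB) (hmin B hB)
  · exact hiJ_subset_dp hf hcut hCp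

lemma fg_eq (hf : ProperOn f D)
    (hE : ∀ Dm Dp : Set (Set I), IsCutOf Dm Dp D →
      ∀ A ∈ E Dm Dp, A ∈ Cuts I ∧ (∀ B ∈ Dm, B ⊆ A) ∧ ∀ B ∈ Dp, A ⊆ B)
    (hgends : ∀ Dm Dp : Set (Set I), IsCutOf Dm Dp D →
      cutLo Dm ∈ E Dm Dp ∧ cutHi Dm Dp ∈ E Dm Dp ∧
      g Dm Dp (cutLo Dm) = cutLo (f '' Dm) ∧
      g Dm Dp (cutHi Dm Dp) = ⋃₀ (f '' Dm) ∪ {y : J | ∃ z ∈ Jv f Dm Dp, y ≤ z})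
    {Dm Dp : Set (Set I)} (hcut : IsCutOf Dm Dp D) {C : Set I}
    (hCE : C ∈ E Dm Dp) (hCD : C ∈ D) : f C = g Dm Dp C := by
  rcases (hcut.1 ▸ hCD : C ∈ Dm ∪ Dp) with hCm | hCp
  · have he := eq_cutLo (E := E) hE hcut hCE hCm
    rw [he, (hgends Dm Dp hcut).2.2.1]
    rw [← he]
    exact f_cutLo hf hcut hCm fun B hB => (hE Dm Dp hcut C hCE).2.1 B hB
  · have he := eq_cutHi hf.1.1 hcut (hE Dm Dp hcut C hCE).1
      (fun B hB => (hE Dm Dp hcut C hCE).2.2 B hB) hCp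
    rw [he, (hgends Dm Dp hcut).2.2.2]
    rw [← he]
    exact f_cutHi hf hcut hCp fun B hB => (hE Dm Dp hcut C hCE).2.2 B hB

end Glue

section Glue2
set_option linter.unusedSectionVars false
set_option linter.unusedVariables false
set_option maxHeartbeats 1000000

variable {I J : Type u} [LinearOrder I] [LinearOrder J]
variable {f : Set I → Set J} {D : Set (Set I)}
  {E : Set (Set I) → Set (Set I) → Set (Set I)}
  {g : Set (Set I) → Set (Set I) → Set I → Set J} {h : Set I → Set J}

/-- the glued domain -/
def Dbig (D : Set (Set I)) (E : Set (Set I) → Set (Set I) → Set (Set I)) : Set (Set I) :=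
  D ∪ {A | ∃ Dm Dp : Set (Set I), IsCutOf Dm Dp D ∧ A ∈ E Dm Dp}

variable (hf : ProperOn f D)
  (hE : ∀ Dm Dp : Set (Set I), IsCutOf Dm Dp D →
      ∀ A ∈ E Dm Dp, A ∈ Cuts I ∧ (∀ B ∈ Dm, B ⊆ A) ∧ ∀ B ∈ Dp, A ⊆ B)
  (hgcore : ∀ Dm Dp : Set (Set I), IsCutOf Dm Dp D → ProperCore (g Dm Dp) (E Dm Dp))
  (hgends : ∀ Dm Dp : Set (Set I), IsCutOf Dm Dp D →
      cutLo Dm ∈ E Dm Dp ∧ cutHi Dm Dp ∈ E Dm Dp ∧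
      g Dm Dp (cutLo Dm) = cutLo (f '' Dm) ∧
      g Dm Dp (cutHi Dm Dp) = ⋃₀ (f '' Dm) ∪ {y : J | ∃ z ∈ Jv f Dm Dp, y ≤ z})
  (hh1 : ∀ A ∈ D, h A = f A)
  (hh2 : ∀ Dm Dp : Set (Set I), IsCutOf Dm Dp D →
      ∀ A ∈ E Dm Dp, A ∉ D → h A = g Dm Dp A)

include hf hE hgcore hgends hh1 hh2

lemma hvalE {Dm Dp : Set (Set I)} (hcut : IsCutOf Dm Dp D) {A : Set I} (hA : A ∈ E Dm Dp) :
    h A = g Dm Dp A := by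
  by_cases hAD : A ∈ D
  · rw [hh1 A hAD]; exact fg_eq hf hE hgends hcut hA hAD
  · exact hh2 Dm Dp hcut A hA hAD

lemma ghi_eq {Dm Dp : Set (Set I)} (hcut : IsCutOf Dm Dp D) :
    g Dm Dp (cutHi Dm Dp) = hiJset f Dm Dp := (hgends Dm Dp hcut).2.2.2

lemma glo_eq {Dm Dp : Set (Set I)} (hcut : IsCutOf Dm Dp D) :
    g Dm Dp (cutLo Dm) = ⋃₀ (f '' Dm) := (hgends Dm Dp hcut).2.2.1

lemma hE_le_hi {Dm Dp : Set (Set I)} (hcut : IsCutOf Dm Dp D) {A : Set I}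
    (hA : A ∈ E Dm Dp) : A ⊆ cutHi Dm Dp :=
  subset_cutHi hf.1.1 hcut (hE Dm Dp hcut A hA).1 (hE Dm Dp hcut A hA).2.2

lemma lo_le_hE {Dm Dp : Set (Set I)} (hcut : IsCutOf Dm Dp D) {A : Set I}
    (hA : A ∈ E Dm Dp) : cutLo Dm ⊆ A :=
  Set.sUnion_subset (hE Dm Dp hcut A hA).2.1

lemma glue_mono : ∀ A ∈ Dbig D E, ∀ B ∈ Dbig D E, A ⊆ B → h A ⊆ h B := by
  have hD := hf.1.1
  intro A hA B hB hAB
  by_cases hAD : A ∈ D <;> by_cases hBD : B ∈ D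
  · rw [hh1 A hAD, hh1 B hBD]
    exact hf.1.2.2.1 A hAD B hBD hAB
  · obtain ⟨Dm, Dp, hcut, hBE⟩ := hB.resolve_left hBD
    rcases (hcut.1 ▸ hAD : A ∈ Dm ∪ Dp) with hAm | hAp
    · rw [hh1 A hAD, hvalE hf hE hgcore hgends hh1 hh2 hcut hBE]
      calc f A ⊆ ⋃₀ (f '' Dm) := Set.subset_sUnion_of_mem ⟨A, hAm, rfl⟩
        _ = g Dm Dp (cutLo Dm) := (glo_eq hf hE hgcore hgends hh1 hh2 hcut).symm
        _ ⊆ g Dm Dp B := (hgcore Dm Dp hcut).2.2.1 _ (hgends Dm Dp hcut).1 B hBE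
              (lo_le_hE hf hE hgcore hgends hh1 hh2 hcut hBE)
    · exact absurd (subset_antisymm hAB ((hE Dm Dp hcut B hBE).2.2 A hAp) ▸ hBD) (fun hc => hc hAD)
  · obtain ⟨Dm, Dp, hcut, hAE⟩ := hA.resolve_left hAD
    rcases (hcut.1 ▸ hBD : B ∈ Dm ∪ Dp) with hBm | hBp
    · exact absurd (subset_antisymm ((hE Dm Dp hcut A hAE).2.1 B hBm) hAB ▸ hAD)
        (fun hc => hc hBD)
    · rw [hvalE hf hE hgcore hgends hh1 hh2 hcut hAE, hh1 B hBD]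
      calc g Dm Dp A ⊆ g Dm Dp (cutHi Dm Dp) :=
              (hgcore Dm Dp hcut).2.2.1 A hAE _ (hgends Dm Dp hcut).2.1
                (hE_le_hi hf hE hgcore hgends hh1 hh2 hcut hAE)
        _ = hiJset f Dm Dp := ghi_eq hf hE hgcore hgends hh1 hh2 hcut
        _ ⊆ f B := hiJ_subset_dp hf hcut hBp
  · obtain ⟨Dm1, Dp1, hcut1, hAE⟩ := hA.resolve_left hAD
    obtain ⟨Dm2, Dp2, hcut2, hBE⟩ := hB.resolve_left hBD
    by_cases heq : Dm1 = Dm2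
    · have hpeq : Dp1 = Dp2 := by
        rw [cut_dp_eq hcut1, cut_dp_eq hcut2, heq]
      subst heq; subst hpeq
      rw [hvalE hf hE hgcore hgends hh1 hh2 hcut1 hAE, hvalE hf hE hgcore hgends hh1 hh2 hcut1 hBE]
      exact (hgcore Dm1 Dp1 hcut1).2.2.1 A hAE B hBE hAB
    · rcases cuts_total hD hcut1 hcut2 with hsub | hsub
      · obtain ⟨C, hC2, hC1⟩ := Set.exists_of_ssubset (hsub.ssubset_of_ne heq)
        have hCp1 : C ∈ Dp1 := by
          rcases (hcut1.1 ▸ cut_dm_subset hcut2 hC2 : C ∈ Dm1 ∪ Dp1) with hm | hp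
          · exact absurd hm hC1
          · exact hp
        rw [hvalE hf hE hgcore hgends hh1 hh2 hcut1 hAE, hvalE hf hE hgcore hgends hh1 hh2 hcut2 hBE]
        calc g Dm1 Dp1 A ⊆ g Dm1 Dp1 (cutHi Dm1 Dp1) :=
                (hgcore Dm1 Dp1 hcut1).2.2.1 A hAE _ (hgends Dm1 Dp1 hcut1).2.1
                  (hE_le_hi hf hE hgcore hgends hh1 hh2 hcut1 hAE)
          _ = hiJset f Dm1 Dp1 := ghi_eq hf hE hgcore hgends hh1 hh2 hcut1
          _ ⊆ f C := hiJ_subset_dp hf hcut1 hCp1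
          _ ⊆ ⋃₀ (f '' Dm2) := Set.subset_sUnion_of_mem ⟨C, hC2, rfl⟩
          _ = g Dm2 Dp2 (cutLo Dm2) := (glo_eq hf hE hgcore hgends hh1 hh2 hcut2).symm
          _ ⊆ g Dm2 Dp2 B := (hgcore Dm2 Dp2 hcut2).2.2.1 _ (hgends Dm2 Dp2 hcut2).1 B hBE
                (lo_le_hE hf hE hgcore hgends hh1 hh2 hcut2 hBE)
      · obtain ⟨C, hC1, hC2⟩ := Set.exists_of_ssubset (hsub.ssubset_of_ne (Ne.symm heq))
        have hCp2 : C ∈ Dp2 := by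
          rcases (hcut2.1 ▸ cut_dm_subset hcut1 hC1 : C ∈ Dm2 ∪ Dp2) with hm | hp
          · exact absurd hm hC2
          · exact hp
        have : A = C := subset_antisymm
          (hAB.trans ((hE Dm2 Dp2 hcut2 B hBE).2.2 C hCp2))
          ((hE Dm1 Dp1 hcut1 A hAE).2.1 C hC1)
        exact absurd (this ▸ cut_dm_subset hcut1 hC1) hAD


lemma glue_strict : ∀ A ∈ Dbig D E, ∀ B ∈ Dbig D E, A ⊂ B → h A ⊂ h B := by
  have hD := hf.1.1
  intro A hA B hB hAB
  by_cases hAD : A ∈ D <;> by_cases hBD : B ∈ D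
  · rw [hh1 A hAD, hh1 B hBD]
    exact hf.1.2.2.2.1 A hAD B hBD hAB
  · obtain ⟨Dm, Dp, hcut, hBE⟩ := hB.resolve_left hBD
    rcases (hcut.1 ▸ hAD : A ∈ Dm ∪ Dp) with hAm | hAp
    · rw [hh1 A hAD, hvalE hf hE hgcore hgends hh1 hh2 hcut hBE]
      by_cases hBlo : B = cutLo Dm
      · obtain ⟨t, htB, htA⟩ := Set.exists_of_ssubset hAB
        have htlo : t ∈ cutLo Dm := hBlo ▸ htB
        obtain ⟨A', hA', htA'⟩ := htlo
        have hAA' : A ⊂ A' := by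
          rcases (hD (cut_dm_subset hcut hAm)).1.total
            (hD (cut_dm_subset hcut hA')).1 with hs | hs
          · exact hs.ssubset_of_ne fun he => htA (he ▸ htA')
          · exact absurd (hs htA') htA
        have h1 : f A ⊂ f A' := hf.1.2.2.2.1 A (cut_dm_subset hcut hAm) A'
          (cut_dm_subset hcut hA') hAA'
        have h2 : f A' ⊆ ⋃₀ (f '' Dm) := Set.subset_sUnion_of_mem ⟨A', hA', rfl⟩
        rw [hBlo, glo_eq hf hE hgcore hgends hh1 hh2 hcut]
        exact ssub_of_ssub_sub h1 h2
      · have hlosub : cutLo Dm ⊂ B :=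
          (lo_le_hE hf hE hgcore hgends hh1 hh2 hcut hBE).ssubset_of_ne
            fun he => hBlo he.symm
        have h1 : f A ⊆ ⋃₀ (f '' Dm) := Set.subset_sUnion_of_mem ⟨A, hAm, rfl⟩
        rw [← glo_eq hf hE hgcore hgends hh1 hh2 hcut] at h1
        exact sub_of_sub_ssub h1 ((hgcore Dm Dp hcut).2.2.2.1 _ (hgends Dm Dp hcut).1 B hBE hlosub)
    · exact absurd (ssub_of_ssub_sub hAB ((hE Dm Dp hcut B hBE).2.2 A hAp)) (lt_irrefl A)
  · obtain ⟨Dm, Dp, hcut, hAE⟩ := hA.resolve_left hAD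
    rcases (hcut.1 ▸ hBD : B ∈ Dm ∪ Dp) with hBm | hBp
    · exact absurd (sub_of_sub_ssub ((hE Dm Dp hcut A hAE).2.1 B hBm) hAB) (lt_irrefl B)
    · rw [hvalE hf hE hgcore hgends hh1 hh2 hcut hAE, hh1 B hBD]
      by_cases hAhi : A = cutHi Dm Dp
      · obtain ⟨t, htB, hthi⟩ := Set.exists_of_ssubset (hAhi ▸ hAB)
        obtain ⟨t', ht'B, htt'⟩ := (hD hBD).2 t htB
        have ht'hi : t' ∉ cutHi Dm Dp := fun hm => hthi (cutHi_lower hD hcut htt'.le hm)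
        have hcond1 : ∀ A' ∈ Dm, A' ⊂ Set.Iio t' := by
          intro A' hA'
          have hnm : t' ∉ A' := fun hm => ht'hi (Or.inl ⟨A', hA', hm⟩)
          refine (lower_subset_Iio (hD (cut_dm_subset hcut hA')).1 hnm).ssubset_of_ne
            fun he => hthi (Or.inl ⟨A', hA', he ▸ htt'⟩)
        have ht'Iv : t' ∉ Iv Dm Dp := fun hm => ht'hi (Or.inr ⟨t', hm, le_refl t'⟩)
        have : ∃ B' ∈ Dp, ¬ (Set.Iio t' ⊂ B') := by
          by_contra hc
          push_neg at hc
          exact ht'Iv ⟨hcond1, hc⟩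
        obtain ⟨B', hB', hB'n⟩ := this
        have hB'sub : B' ⊆ Set.Iio t' := by
          by_cases hm : t' ∈ B'
          · exfalso
            apply hB'n
            have hsub2 : Set.Iio t' ⊆ B' := fun u hu => (hD (cut_dp_subset hcut hB')).1 hu.le hm
            refine hsub2.ssubset_of_ne fun he => ?_
            rw [← he] at hm
            exact absurd hm (lt_irrefl t')
          · exact lower_subset_Iio (hD (cut_dp_subset hcut hB')).1 hm
        have hB'B : B' ⊂ B := by
          refine (hB'sub.trans fun u hu => (hD hBD).1 hu.le ht'B).ssubset_of_ne fun he => ?_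
          exact absurd (hB'sub (he ▸ ht'B)) (lt_irrefl t')
        have h1 : hiJset f Dm Dp ⊆ f B' := hiJ_subset_dp hf hcut hB'
        have h2 : f B' ⊂ f B := hf.1.2.2.2.1 B' (cut_dp_subset hcut hB') B hBD hB'B
        rw [hAhi, ghi_eq hf hE hgcore hgends hh1 hh2 hcut]
        exact sub_of_sub_ssub h1 h2
      · have hAhi' : A ⊂ cutHi Dm Dp :=
          (hE_le_hi hf hE hgcore hgends hh1 hh2 hcut hAE).ssubset_of_ne hAhi
        have h1 : g Dm Dp A ⊂ g Dm Dp (cutHi Dm Dp) :=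
          (hgcore Dm Dp hcut).2.2.2.1 A hAE _ (hgends Dm Dp hcut).2.1 hAhi'
        rw [ghi_eq hf hE hgcore hgends hh1 hh2 hcut] at h1
        exact ssub_of_ssub_sub h1 (hiJ_subset_dp hf hcut hBp)
  · obtain ⟨Dm1, Dp1, hcut1, hAE⟩ := hA.resolve_left hAD
    obtain ⟨Dm2, Dp2, hcut2, hBE⟩ := hB.resolve_left hBD
    by_cases heq : Dm1 = Dm2
    · have hpeq : Dp1 = Dp2 := by
        rw [cut_dp_eq hcut1, cut_dp_eq hcut2, heq]
      subst heq; subst hpeq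
      rw [hvalE hf hE hgcore hgends hh1 hh2 hcut1 hAE,
        hvalE hf hE hgcore hgends hh1 hh2 hcut1 hBE]
      exact (hgcore Dm1 Dp1 hcut1).2.2.2.1 A hAE B hBE hAB
    · rcases cuts_total hD hcut1 hcut2 with hsub | hsub
      · obtain ⟨C, hC2, hC1⟩ := Set.exists_of_ssubset (hsub.ssubset_of_ne heq)
        have hCp1 : C ∈ Dp1 := by
          rcases (hcut1.1 ▸ cut_dm_subset hcut2 hC2 : C ∈ Dm1 ∪ Dp1) with hm | hp
          · exact absurd hm hC1
          · exact hp
        rw [hvalE hf hE hgcore hgends hh1 hh2 hcut1 hAE,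
          hvalE hf hE hgcore hgends hh1 hh2 hcut2 hBE]
        have hstart : g Dm1 Dp1 A ⊆ f C := by
          calc g Dm1 Dp1 A ⊆ g Dm1 Dp1 (cutHi Dm1 Dp1) :=
                  (hgcore Dm1 Dp1 hcut1).2.2.1 A hAE _ (hgends Dm1 Dp1 hcut1).2.1
                    (hE_le_hi hf hE hgcore hgends hh1 hh2 hcut1 hAE)
            _ = hiJset f Dm1 Dp1 := ghi_eq hf hE hgcore hgends hh1 hh2 hcut1
            _ ⊆ f C := hiJ_subset_dp hf hcut1 hCp1
        by_cases hmax : ∀ C' ∈ Dm2, C' ⊆ C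
        · have hCD : C ∈ D := cut_dm_subset hcut2 hC2
          have hloC : cutLo Dm2 = C := by
            apply subset_antisymm (Set.sUnion_subset hmax)
            exact fun t ht => ⟨C, hC2, ht⟩
          have hfC : f C = g Dm2 Dp2 (cutLo Dm2) := by
            rw [glo_eq hf hE hgcore hgends hh1 hh2 hcut2]
            exact f_cutLo hf hcut2 hC2 hmax
          have hlosub : cutLo Dm2 ⊂ B :=
            (lo_le_hE hf hE hgcore hgends hh1 hh2 hcut2 hBE).ssubset_of_ne
              fun he => hBD (he ▸ (hloC ▸ hCD))
          have : g Dm2 Dp2 (cutLo Dm2) ⊂ g Dm2 Dp2 B :=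
            (hgcore Dm2 Dp2 hcut2).2.2.2.1 _ (hgends Dm2 Dp2 hcut2).1 B hBE hlosub
          exact sub_of_sub_ssub (hstart.trans (hfC ▸ Set.Subset.refl _)) this
        · push_neg at hmax
          obtain ⟨C', hC', hCC'⟩ := hmax
          have hCsub : C ⊂ C' := by
            rcases (hD (cut_dm_subset hcut2 hC2)).1.total
              (hD (cut_dm_subset hcut2 hC')).1 with hs | hs
            · exact hs.ssubset_of_ne fun he => hCC' (he ▸ Set.Subset.refl _)
            · exact absurd hs hCC'
          have h1 : f C ⊂ f C' := hf.1.2.2.2.1 C (cut_dm_subset hcut2 hC2) C'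
            (cut_dm_subset hcut2 hC') hCsub
          have h2 : f C' ⊆ ⋃₀ (f '' Dm2) := Set.subset_sUnion_of_mem ⟨C', hC', rfl⟩
          rw [← glo_eq hf hE hgcore hgends hh1 hh2 hcut2] at h2
          have h3 : g Dm2 Dp2 (cutLo Dm2) ⊆ g Dm2 Dp2 B :=
            (hgcore Dm2 Dp2 hcut2).2.2.1 _ (hgends Dm2 Dp2 hcut2).1 B hBE
              (lo_le_hE hf hE hgcore hgends hh1 hh2 hcut2 hBE)
          exact sub_of_sub_ssub hstart (ssub_of_ssub_sub (ssub_of_ssub_sub h1 h2) h3)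
      · obtain ⟨C, hC1, hC2⟩ := Set.exists_of_ssubset (hsub.ssubset_of_ne (Ne.symm heq))
        have hCp2 : C ∈ Dp2 := by
          rcases (hcut2.1 ▸ cut_dm_subset hcut1 hC1 : C ∈ Dm2 ∪ Dp2) with hm | hp
          · exact absurd hm hC2
          · exact hp
        have : A = C := subset_antisymm
          (hAB.1.trans ((hE Dm2 Dp2 hcut2 B hBE).2.2 C hCp2))
          ((hE Dm1 Dp1 hcut1 A hAE).2.1 C hC1)
        exact absurd (this ▸ cut_dm_subset hcut1 hC1) hAD

lemma Dbig_cuts : ∀ A ∈ Dbig D E, A ∈ Cuts I := by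
  rintro A (hAD | ⟨Dm, Dp, hcut, hAE⟩)
  · exact hf.1.1 hAD
  · exact (hE Dm Dp hcut A hAE).1

lemma infTransfer {Dm Dp : Set (Set I)} (hcut : IsCutOf Dm Dp D)
    (hne : (Iv Dm Dp).Nonempty → (Jv f Dm Dp).Nonempty)
    (hsub : ∀ x, (∀ B ∈ Dp, x ∈ B) → x ∈ cutHi Dm Dp)
    {y : J} (hy : ∀ B ∈ Dp, y ∈ f B) : y ∈ hiJset f Dm Dp := by
  obtain ⟨⟨hD, hfc, hmono, hstrict, hlub, hglb, hprin⟩, h0, h1, hf0, hf1⟩ := id hf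
  by_contra hcon
  have hyU : y ∉ ⋃₀ (f '' Dm) := fun hm => hcon (Or.inl hm)
  have hyC : ¬ ∃ z ∈ Jv f Dm Dp, y ≤ z := fun hm => hcon (Or.inr hm)
  have hyJv : y ∉ Jv f Dm Dp := fun hm => hyC ⟨y, hm, le_refl y⟩
  have : ∃ A₀ ∈ Dm, ¬ (f A₀ ⊂ Set.Iio y) := by
    by_contra hc
    push_neg at hc
    refine hyJv ⟨hc, fun B hB => ?_⟩
    have hyB := hy B hB
    have hsub2 : Set.Iio y ⊆ f B := fun u hu => (hfc B (cut_dp_subset hcut hB)).1 hu.le hyB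
    refine hsub2.ssubset_of_ne fun he => ?_
    rw [← he] at hyB
    exact absurd hyB (lt_irrefl y)
  obtain ⟨A₀, hA₀, hA₀n⟩ := this
  have hA₀D : A₀ ∈ D := cut_dm_subset hcut hA₀
  have hfsub : f A₀ ⊆ Set.Iio y :=
    lower_subset_Iio (hfc A₀ hA₀D).1 (fun hm => hyU ⟨f A₀, ⟨A₀, hA₀, rfl⟩, hm⟩)
  have hfeq : f A₀ = Set.Iio y := by
    by_contra hne'
    exact hA₀n (hfsub.ssubset_of_ne hne')
  obtain ⟨x, hx⟩ : ∃ x, A₀ = Set.Iio x := (hprin A₀ hA₀D).2 ⟨y, hfeq⟩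
  by_cases hxU : x ∈ ⋃₀ Dm
  · obtain ⟨A', hA', hxA'⟩ := hxU
    have hss : A₀ ⊂ A' := by
      rw [hx]
      have hsub2 : Set.Iio x ⊆ A' := fun u hu => (hD (cut_dm_subset hcut hA')).1 hu.le hxA'
      refine hsub2.ssubset_of_ne fun he => ?_
      rw [← he] at hxA'
      exact absurd hxA' (lt_irrefl x)
    have hss2 : f A₀ ⊂ f A' := hstrict A₀ hA₀D A' (cut_dm_subset hcut hA') hss
    rw [hfeq] at hss2
    exact hyU ⟨f A', ⟨A', hA', rfl⟩,
      mem_of_Iio_ssubset (hfc A' (cut_dm_subset hcut hA')).1 hss2⟩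
  · have hxB : ∀ B ∈ Dp, x ∈ B := by
      intro B hB
      by_contra hxB
      have hsubB : B ⊆ A₀ := by
        rw [hx]
        exact lower_subset_Iio (hD (cut_dp_subset hcut hB)).1 hxB
      exact Set.disjoint_left.mp hcut.2.1 (hcut.2.2 A₀ hA₀ B (cut_dp_subset hcut hB) hsubB) hB
    rcases hsub x hxB with hl | ⟨z, hz, hxz⟩
    · exact hxU hl
    · obtain ⟨w, hw⟩ := hne ⟨z, hz⟩
      have h1 : f A₀ ⊂ Set.Iio w := hw.1 A₀ hA₀
      rw [hfeq] at h1
      obtain ⟨u, hu, hnu⟩ := exists_of_ssubset h1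
      exact hyC ⟨w, hw, (not_lt.mp (by simpa using hnu)).trans (le_of_lt hu)⟩

lemma glue_lub : ∀ S ⊆ Dbig D E, ∀ A ∈ Dbig (D := D) E, IsLUB S A → IsLUB (h '' S) (h A) := by
  have hD := hf.1.1
  intro S hS A hAB' hlubA
  have hub : h A ∈ upperBounds (h '' S) := by
    rintro _ ⟨C, hC, rfl⟩
    exact glue_mono hf hE hgcore hgends hh1 hh2 C (hS hC) A hAB' (hlubA.1 hC)
  suffices hle : h A ⊆ ⋃₀ (h '' S) by
    refine ⟨hub, fun U hU => ?_⟩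
    exact hle.trans (Set.sUnion_subset fun V hV => hU hV)
  have hAeq : A = ⋃₀ S := by
    have := hlubA.unique (isLUB_sSup S)
    rwa [Set.sSup_eq_sUnion] at this
  by_cases hin : ∃ C ∈ S, A ⊆ C
  · obtain ⟨C, hC, hAC⟩ := hin
    have : A = C := subset_antisymm hAC (hlubA.1 hC)
    exact this ▸ Set.subset_sUnion_of_mem ⟨C, hC, this ▸ rfl⟩
  push_neg at hin
  -- the induced cut
  set Dm : Set (Set I) := {B ∈ D | ∃ C ∈ S, B ⊆ C} with hDm_def
  have hdc : ∀ B ∈ Dm, ∀ B' ∈ D, B' ⊆ B → B' ∈ Dm := by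
    rintro B ⟨hBD, C, hC, hBC⟩ B' hB' hsub
    exact ⟨hB', C, hC, hsub.trans hBC⟩
  have hcut : IsCutOf Dm (D \ Dm) D := mk_cut (fun B hB => hB.1) hdc
  set Dp : Set (Set I) := D \ Dm with hDp_def
  have hADp : ∀ B ∈ Dp, A ⊆ B := by
    rintro B ⟨hBD, hBm⟩
    rw [hAeq]
    apply Set.sUnion_subset
    intro C hC
    rcases (Dbig_cuts hf hE hgcore hgends hh1 hh2 C (hS hC)).1.total (hD hBD).1 with hs | hs
    · exact hs
    · exact absurd ⟨hBD, C, hC, hs⟩ hBm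
  have hssubA : ∀ C ∈ S, C ⊂ A := fun C hC =>
    lt_of_le_of_ne (hlubA.1 hC) fun he => hin C hC (he ▸ Set.Subset.refl _)
  have hAE : A ∈ E Dm Dp := by
    by_cases hAD2 : A ∈ D
    · have hAp : A ∈ Dp := by
        refine ⟨hAD2, ?_⟩
        rintro ⟨-, C, hC, hAC⟩
        exact hin C hC hAC
      have := eq_cutHi hD hcut (hD hAD2) hADp hAp
      rw [this]
      exact (hgends Dm Dp hcut).2.1
    · obtain ⟨Dm', Dp', hcut', hAE'⟩ := hAB'.resolve_left hAD2
      have hmeq : Dm' = Dm := by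
        apply subset_antisymm
        · intro B hB
          have hBD : B ∈ D := cut_dm_subset hcut' hB
          rcases (hcut.1 ▸ hBD : B ∈ Dm ∪ Dp) with hm | hp
          · exact hm
          · exact absurd (subset_antisymm (hADp B hp) ((hE Dm' Dp' hcut' A hAE').2.1 B hB)
              ▸ hBD) hAD2
        · rintro B ⟨hBD, C, hC, hBC⟩
          rcases (hcut'.1 ▸ hBD : B ∈ Dm' ∪ Dp') with hm | hp
          · exact hm
          · exact absurd (((hE Dm' Dp' hcut' A hAE').2.2 B hp).trans hBC) (hin C hC)
      have hpeq : Dp' = Dp := by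
        rw [cut_dp_eq hcut', cut_dp_eq hcut, hmeq]
      rw [← hmeq, ← hpeq]
      exact hAE'
  set T : Set (Set I) := insert (cutLo Dm) (S ∩ E Dm Dp) with hT_def
  have hTE : T ⊆ E Dm Dp := by
    rintro C (rfl | ⟨hC1, hC2⟩)
    · exact (hgends Dm Dp hcut).1
    · exact hC2
  have hTeq : ⋃₀ T = A := by
    apply subset_antisymm
    · apply Set.sUnion_subset
      rintro C (rfl | ⟨hC1, hC2⟩)
      · exact lo_le_hE hf hE hgcore hgends hh1 hh2 hcut hAE
      · exact hlubA.1 hC1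
    · rw [hAeq]
      apply Set.sUnion_subset
      intro C hC
      by_cases hCD : C ∈ D
      · have hCm : C ∈ Dm := ⟨hCD, C, hC, Set.Subset.refl _⟩
        exact (fun t ht => ⟨cutLo Dm, Or.inl rfl, ⟨C, hCm, ht⟩⟩)
      · obtain ⟨Dm', Dp', hcut', hCE'⟩ := (hS hC).resolve_left hCD
        by_cases hmeq : Dm' = Dm
        · have hpeq : Dp' = Dp := by rw [cut_dp_eq hcut', cut_dp_eq hcut, hmeq]
          subst hmeq; subst hpeq
          exact Set.subset_sUnion_of_mem (Or.inr ⟨hC, hCE'⟩)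
        · rcases cuts_total hD hcut' hcut with hsub | hsub
          · obtain ⟨B, hBm, hBm'⟩ := Set.exists_of_ssubset (hsub.ssubset_of_ne hmeq)
            have hBp' : B ∈ Dp' := by
              rcases (hcut'.1 ▸ cut_dm_subset hcut hBm : B ∈ Dm' ∪ Dp') with hm | hp
              · exact absurd hm hBm'
              · exact hp
            have : C ⊆ cutLo Dm := fun t ht =>
              ⟨B, hBm, (hE Dm' Dp' hcut' C hCE').2.2 B hBp' ht⟩
            exact fun t ht => ⟨cutLo Dm, Or.inl rfl, this ht⟩
          · obtain ⟨B, hBm', hBm⟩ := Set.exists_of_ssubset (hsub.ssubset_of_ne (Ne.symm hmeq))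
            have hBp : B ∈ Dp := by
              rcases (hcut.1 ▸ cut_dm_subset hcut' hBm' : B ∈ Dm ∪ Dp) with hm | hp
              · exact absurd hm hBm
              · exact hp
            exact absurd (sub_of_sub_ssub ((hADp B hBp).trans
              ((hE Dm' Dp' hcut' C hCE').2.1 B hBm')) (hssubA C hC)) (lt_irrefl A)
  have hlubT : IsLUB T A := by
    rw [← hTeq, ← Set.sSup_eq_sUnion]
    exact isLUB_sSup T
  have hglub : IsLUB (g Dm Dp '' T) (g Dm Dp A) :=
    (hgcore Dm Dp hcut).2.2.2.2.1 T hTE A hAE hlubT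
  have hgeq : g Dm Dp A = ⋃₀ (g Dm Dp '' T) := by
    have := hglub.unique (isLUB_sSup _)
    rwa [Set.sSup_eq_sUnion] at this
  rw [hvalE hf hE hgcore hgends hh1 hh2 hcut hAE, hgeq]
  apply Set.sUnion_subset
  rintro _ ⟨C, hCT, rfl⟩
  rcases hCT with rfl | ⟨hC1, hC2⟩
  · rw [glo_eq hf hE hgcore hgends hh1 hh2 hcut]
    apply Set.sUnion_subset
    rintro _ ⟨B, hBm, rfl⟩
    obtain ⟨hBD, C', hC', hBC'⟩ := hBm
    have : f B ⊆ h C' := by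
      rw [← hh1 B hBD]
      exact glue_mono hf hE hgcore hgends hh1 hh2 B (Or.inl hBD) C' (hS hC') hBC'
    exact this.trans (Set.subset_sUnion_of_mem ⟨C', hC', rfl⟩)
  · rw [← hvalE hf hE hgcore hgends hh1 hh2 hcut hC2]
    exact Set.subset_sUnion_of_mem ⟨C, hC1, rfl⟩

lemma glue_glb
    (hne : ∀ Dm Dp : Set (Set I), IsCutOf Dm Dp D →
      ((Iv Dm Dp).Nonempty → (Jv f Dm Dp).Nonempty)) :
    ∀ S ⊆ Dbig D E, ∀ A ∈ Dbig (D := D) E, IsGLB S A → IsGLB (h '' S) (h A) := by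
  have hD := hf.1.1
  intro S hS A hAB' hglbA
  have hlb : h A ∈ lowerBounds (h '' S) := by
    rintro _ ⟨C, hC, rfl⟩
    exact glue_mono hf hE hgcore hgends hh1 hh2 A hAB' C (hS hC) (hglbA.1 hC)
  suffices hle : ⋂₀ (h '' S) ⊆ h A by
    refine ⟨hlb, fun U hU => ?_⟩
    refine le_trans (fun y hy => ?_) hle
    exact fun V ⟨C, hC, hCe⟩ => hCe ▸ hU ⟨C, hC, rfl⟩ hy
  rcases Set.eq_empty_or_nonempty S with rfl | hSne
  · have hAeq : A = Set.univ := by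
      have := hglbA.unique (isGLB_sInf (∅ : Set (Set I)))
      rwa [Set.sInf_eq_sInter, Set.sInter_empty] at this
    rw [hAeq, hh1 _ hf.2.2.1, hf.2.2.2.2]
    exact fun y hy => Set.mem_univ y
  have hAeq : A = ⋂₀ S := by
    have := hglbA.unique (isGLB_sInf S)
    rwa [Set.sInf_eq_sInter] at this
  by_cases hin : ∃ C ∈ S, C ⊆ A
  · obtain ⟨C, hC, hCA⟩ := hin
    have : A = C := subset_antisymm (hglbA.1 hC) hCA
    exact fun y hy => this ▸ hy (h C) ⟨C, hC, rfl⟩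
  push_neg at hin
  have hssubA : ∀ C ∈ S, A ⊂ C := fun C hC =>
    lt_of_le_of_ne (hglbA.1 hC) fun he => hin C hC (he ▸ Set.Subset.refl _)
  -- the induced cut
  set Dm : Set (Set I) := {B ∈ D | ¬ ∃ C ∈ S, C ⊆ B} with hDm_def
  have hdc : ∀ B ∈ Dm, ∀ B' ∈ D, B' ⊆ B → B' ∈ Dm := by
    rintro B ⟨hBD, hBn⟩ B' hB' hsub
    exact ⟨hB', fun ⟨C, hC, hCB'⟩ => hBn ⟨C, hC, hCB'.trans hsub⟩⟩
  have hcut : IsCutOf Dm (D \ Dm) D := mk_cut (fun B hB => hB.1) hdc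
  set Dp : Set (Set I) := D \ Dm with hDp_def
  have hDpmem : ∀ B ∈ Dp, ∃ C ∈ S, C ⊆ B := by
    rintro B ⟨hBD, hBn⟩
    by_contra hc
    exact hBn ⟨hBD, hc⟩
  have hADp : ∀ B ∈ Dp, A ⊆ B := by
    intro B hB
    obtain ⟨C, hC, hCB⟩ := hDpmem B hB
    exact (hglbA.1 hC).trans hCB
  have hDmA : ∀ B ∈ Dm, B ⊆ A := by
    rintro B ⟨hBD, hBn⟩
    rw [hAeq]
    refine Set.subset_sInter fun C hC => ?_
    rcases (hD hBD).1.total (Dbig_cuts hf hE hgcore hgends hh1 hh2 C (hS hC)).1 with hs | hs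
    · exact hs
    · exact absurd ⟨C, hC, hs⟩ hBn
  have hAE : A ∈ E Dm Dp := by
    by_cases hAD2 : A ∈ D
    · have hAm : A ∈ Dm := by
        refine ⟨hAD2, fun ⟨C, hC, hCA⟩ => hin C hC hCA⟩
      have hAlo : A = cutLo Dm :=
        subset_antisymm (fun t ht => ⟨A, hAm, ht⟩) (Set.sUnion_subset hDmA)
      rw [hAlo]
      exact (hgends Dm Dp hcut).1
    · obtain ⟨Dm', Dp', hcut', hAE'⟩ := hAB'.resolve_left hAD2
      have hmeq : Dm' = Dm := by
        apply subset_antisymm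
        · intro B hB
          have hBD : B ∈ D := cut_dm_subset hcut' hB
          rcases (hcut.1 ▸ hBD : B ∈ Dm ∪ Dp) with hm | hp
          · exact hm
          · exact absurd (subset_antisymm (hADp B hp)
              ((hE Dm' Dp' hcut' A hAE').2.1 B hB) ▸ hBD) hAD2
        · intro B hB
          have hBD : B ∈ D := cut_dm_subset hcut hB
          rcases (hcut'.1 ▸ hBD : B ∈ Dm' ∪ Dp') with hm | hp
          · exact hm
          · exact absurd (subset_antisymm ((hE Dm' Dp' hcut' A hAE').2.2 B hp)
              (hDmA B hB) ▸ hBD) hAD2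
      have hpeq : Dp' = Dp := by
        rw [cut_dp_eq hcut', cut_dp_eq hcut, hmeq]
      rw [← hmeq, ← hpeq]
      exact hAE'
  set T : Set (Set I) := insert (cutHi Dm Dp) (S ∩ E Dm Dp) with hT_def
  have hTE : T ⊆ E Dm Dp := by
    rintro C (rfl | ⟨hC1, hC2⟩)
    · exact (hgends Dm Dp hcut).2.1
    · exact hC2
  have hmemC : ∀ C ∈ S, C ∉ E Dm Dp → ∃ B ∈ Dp, B ⊆ C := by
    intro C hC hCE
    by_cases hCD : C ∈ D
    · have hCp : C ∈ Dp := by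
        refine ⟨hCD, fun hCm => ?_⟩
        exact hCm.2 ⟨C, hC, Set.Subset.refl _⟩
      exact ⟨C, hCp, Set.Subset.refl _⟩
    · obtain ⟨Dm', Dp', hcut', hCE'⟩ := (hS hC).resolve_left hCD
      by_cases hmeq : Dm' = Dm
      · have hpeq : Dp' = Dp := by rw [cut_dp_eq hcut', cut_dp_eq hcut, hmeq]
        rw [hmeq, hpeq] at hCE'
        exact absurd hCE' hCE
      · rcases cuts_total hD hcut hcut' with hsub | hsub
        · obtain ⟨B, hBm', hBm⟩ := Set.exists_of_ssubset (hsub.ssubset_of_ne (Ne.symm hmeq))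
          have hBp : B ∈ Dp := by
            rcases (hcut.1 ▸ cut_dm_subset hcut' hBm' : B ∈ Dm ∪ Dp) with hm | hp
            · exact absurd hm hBm
            · exact hp
          exact ⟨B, hBp, (hE Dm' Dp' hcut' C hCE').2.1 B hBm'⟩
        · obtain ⟨B, hBm, hBm'⟩ := Set.exists_of_ssubset (hsub.ssubset_of_ne hmeq)
          have hBp' : B ∈ Dp' := by
            rcases (hcut'.1 ▸ cut_dm_subset hcut hBm : B ∈ Dm' ∪ Dp') with hm | hp
            · exact absurd hm hBm'
            · exact hp
          exact absurd (sub_of_sub_ssub (((hE Dm' Dp' hcut' C hCE').2.2 B hBp').trans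
            (hDmA B hBm)) (hssubA C hC)) (lt_irrefl C)
  have hTeq : ⋂₀ T = A := by
    apply subset_antisymm
    · rw [hAeq]
      refine Set.subset_sInter fun C hC => ?_
      intro t ht
      by_cases hCE : C ∈ E Dm Dp
      · exact ht C (Or.inr ⟨hC, hCE⟩)
      · obtain ⟨B, hBp, hBC⟩ := hmemC C hC hCE
        exact hBC (hi_subset_dp hD hcut hBp (ht (cutHi Dm Dp) (Or.inl rfl)))
    · refine Set.subset_sInter ?_
      rintro C (rfl | ⟨hC1, hC2⟩)
      · exact hE_le_hi hf hE hgcore hgends hh1 hh2 hcut hAE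
      · exact hglbA.1 hC1
  have hglbT : IsGLB T A := by
    rw [← hTeq, ← Set.sInf_eq_sInter]
    exact isGLB_sInf T
  have hgglb : IsGLB (g Dm Dp '' T) (g Dm Dp A) :=
    (hgcore Dm Dp hcut).2.2.2.2.2.1 T hTE A hAE hglbT
  have hgeq : g Dm Dp A = ⋂₀ (g Dm Dp '' T) := by
    have := hgglb.unique (isGLB_sInf _)
    rwa [Set.sInf_eq_sInter] at this
  rw [hvalE hf hE hgcore hgends hh1 hh2 hcut hAE, hgeq]
  intro y hy
  rintro _ ⟨C, hCT, rfl⟩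
  rcases hCT with rfl | ⟨hC1, hC2⟩
  · -- y ∈ g (cutHi)
    rcases Set.eq_empty_or_nonempty (S ∩ E Dm Dp) with hSE | ⟨C0, hC01, hC02⟩
    · -- use the inf transfer lemma
      rw [ghi_eq hf hE hgcore hgends hh1 hh2 hcut]
      refine infTransfer hf hE hgcore hgends hh1 hh2 hcut (hne Dm Dp hcut) ?_ ?_
      · intro x hx
        have hxA : x ∈ A := by
          rw [hAeq]
          refine fun C hC => ?_
          by_cases hCE : C ∈ E Dm Dp
          · exact absurd (Set.mem_inter hC hCE) (hSE ▸ Set.notMem_empty C)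
          · obtain ⟨B, hBp, hBC⟩ := hmemC C hC hCE
            exact hBC (hx B hBp)
        exact hE_le_hi hf hE hgcore hgends hh1 hh2 hcut hAE hxA
      · intro B hB
        obtain ⟨C, hC, hCB⟩ := hDpmem B hB
        have : h C ⊆ f B := by
          rw [← hh1 B hB.1]
          exact glue_mono hf hE hgcore hgends hh1 hh2 C (hS hC) B (Or.inl hB.1) hCB
        exact this (hy (h C) ⟨C, hC, rfl⟩)
    · have hyC0 : y ∈ g Dm Dp C0 := by
        rw [← hvalE hf hE hgcore hgends hh1 hh2 hcut hC02]
        exact hy (h C0) ⟨C0, hC01, rfl⟩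
      exact (hgcore Dm Dp hcut).2.2.1 C0 hC02 _ (hgends Dm Dp hcut).2.1
        (hE_le_hi hf hE hgcore hgends hh1 hh2 hcut hC02) hyC0
  · rw [← hvalE hf hE hgcore hgends hh1 hh2 hcut hC2]
    exact hy (h C) ⟨C, hC1, rfl⟩

end Glue2

section Final
set_option linter.unusedSectionVars false
set_option linter.unusedVariables false
set_option maxHeartbeats 2000000

variable {I J : Type u} [LinearOrder I] [LinearOrder J]

lemma strong_of_empty (lam : Cardinal.{u}) (hlam : 0 < lam) {S : Set I} {T : Set J}
    (hS : S = ∅) (hT : T = ∅) (α : Ordinal) :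
    @FirstOrder.Language.ElementarilyEquivalent FirstOrder.Language.order
        ↥S ↥T (FirstOrder.Language.orderStructure ↥S) (FirstOrder.Language.orderStructure ↥T) ∧
      @RankGe FirstOrder.Language.order ↥S ↥T (FirstOrder.Language.orderStructure ↥S)
        (FirstOrder.Language.orderStructure ↥T) lam α ∅ := by
  subst hS; subst hT
  haveI : IsEmpty ↥(∅ : Set I) := Set.isEmpty_coe_sort.mpr rfl
  haveI : IsEmpty ↥(∅ : Set J) := Set.isEmpty_coe_sort.mpr rfl
  letI iS := FirstOrder.Language.orderStructure ↥(∅ : Set I)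
  letI jS := FirstOrder.Language.orderStructure ↥(∅ : Set J)
  exact ⟨Language.StrongHomClass.elementarilyEquivalent (emptyLEquiv _ _),
    rankGe_of_isEmpty _ _ lam hlam α⟩

end Final

/-- Gluing strong maps: if `f : D → J̄` is an `α`-strong proper function and for every `D`-cut
`ν = (Dm, Dp)` there is a set `E_ν` of cuts of the interval `I(ν)` and an `α`-strong proper
function `g_ν : E_ν → (the completion of J(f(ν)))`, then the common extension
`f ∪ ⋃_ν g_ν` is proper and `α`-strong. -/
theorem glue_strong_maps (mu : Cardinal.{u}) (hmu : Cardinal.aleph0 < mu)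
    {I J : Type u} [LinearOrder I] [LinearOrder J]
    [DenselyOrdered I] [DenselyOrdered J]
    (α : Ordinal) (hα : 1 ≤ α) (f : Set I → Set J) (D : Set (Set I))
    (hf : ProperOn f D) (hstrong : StrongOn mu f D α)
    (E : Set (Set I) → Set (Set I) → Set (Set I))
    (g : Set (Set I) → Set (Set I) → Set I → Set J)
    -- each `E_ν` consists of cuts lying in the interval of `ν`:
    (hE : ∀ Dm Dp : Set (Set I), IsCutOf Dm Dp D →
      ∀ A ∈ E Dm Dp, A ∈ Cuts I ∧ (∀ B ∈ Dm, B ⊆ A) ∧ ∀ B ∈ Dp, A ⊆ B)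
    -- each `g_ν` is proper on `E_ν` (relative to the interval of `ν`) and `α`-strong:
    (hgcore : ∀ Dm Dp : Set (Set I), IsCutOf Dm Dp D → ProperCore (g Dm Dp) (E Dm Dp))
    (hgends : ∀ Dm Dp : Set (Set I), IsCutOf Dm Dp D →
      cutLo Dm ∈ E Dm Dp ∧ cutHi Dm Dp ∈ E Dm Dp ∧
      g Dm Dp (cutLo Dm) = cutLo (f '' Dm) ∧
      g Dm Dp (cutHi Dm Dp) = ⋃₀ (f '' Dm) ∪ {y : J | ∃ z ∈ Jv f Dm Dp, y ≤ z})
    (hgstrong : ∀ Dm Dp : Set (Set I), IsCutOf Dm Dp D →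
      StrongOn mu (g Dm Dp) (E Dm Dp) α)
    -- `h` is the common extension `f ∪ ⋃_ν g_ν`:
    (h : Set I → Set J) (hh1 : ∀ A ∈ D, h A = f A)
    (hh2 : ∀ Dm Dp : Set (Set I), IsCutOf Dm Dp D →
      ∀ A ∈ E Dm Dp, A ∉ D → h A = g Dm Dp A) :
    ProperOn h (D ∪ {A | ∃ Dm Dp : Set (Set I), IsCutOf Dm Dp D ∧ A ∈ E Dm Dp}) ∧
    StrongOn mu h (D ∪ {A | ∃ Dm Dp : Set (Set I), IsCutOf Dm Dp D ∧ A ∈ E Dm Dp}) α := by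
  have hD := hf.1.1
  have hpos : (0 : Cardinal) < Order.succ mu :=
    lt_of_lt_of_le (Cardinal.aleph0_pos.trans hmu) (Order.le_succ mu)
  have hneall : ∀ Dm Dp : Set (Set I), IsCutOf Dm Dp D →
      ((Iv Dm Dp).Nonempty → (Jv f Dm Dp).Nonempty) := by
    intro Dm Dp hcut hne
    letI iS := FirstOrder.Language.orderStructure ↥(Iv Dm Dp)
    letI jS := FirstOrder.Language.orderStructure ↥(Jv f Dm Dp)
    have hst := (hstrong Dm Dp hcut).1
    exact Set.nonempty_coe_sort.mp
      ((hst.nonempty_iff).mp (Set.nonempty_coe_sort.mpr hne))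
  have hnerev : ∀ Dm Dp : Set (Set I), IsCutOf Dm Dp D →
      ((Jv f Dm Dp).Nonempty → (Iv Dm Dp).Nonempty) := by
    intro Dm Dp hcut hne
    letI iS := FirstOrder.Language.orderStructure ↥(Iv Dm Dp)
    letI jS := FirstOrder.Language.orderStructure ↥(Jv f Dm Dp)
    have hst := (hstrong Dm Dp hcut).1
    exact Set.nonempty_coe_sort.mp
      ((hst.nonempty_iff).mpr (Set.nonempty_coe_sort.mpr hne))
  constructor
  · -- ProperOn
    show ProperOn h (Dbig D E)
    refine ⟨⟨Dbig_cuts hf hE hgcore hgends hh1 hh2, ?_,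
      glue_mono hf hE hgcore hgends hh1 hh2,
      glue_strict hf hE hgcore hgends hh1 hh2,
      glue_lub hf hE hgcore hgends hh1 hh2,
      glue_glb hf hE hgcore hgends hh1 hh2 hneall, ?_⟩,
      Or.inl hf.2.1, Or.inl hf.2.2.1, ?_, ?_⟩
    · rintro A (hAD | ⟨Dm, Dp, hcut, hAE⟩)
      · rw [hh1 A hAD]; exact hf.1.2.1 A hAD
      · rw [hvalE hf hE hgcore hgends hh1 hh2 hcut hAE]
        exact (hgcore Dm Dp hcut).2.1 A hAE
    · rintro A (hAD | ⟨Dm, Dp, hcut, hAE⟩)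
      · rw [hh1 A hAD]; exact hf.1.2.2.2.2.2.2 A hAD
      · rw [hvalE hf hE hgcore hgends hh1 hh2 hcut hAE]
        exact (hgcore Dm Dp hcut).2.2.2.2.2.2 A hAE
    · rw [hh1 ∅ hf.2.1]; exact hf.2.2.2.1
    · rw [hh1 Set.univ hf.2.2.1]; exact hf.2.2.2.2
  · -- StrongOn
    intro Dm' Dp' hcut'
    set Dm : Set (Set I) := Dm' ∩ D with hDm_def
    set Dp : Set (Set I) := Dp' ∩ D with hDp_def
    have hcutD : IsCutOf Dm Dp D := by
      refine ⟨?_, ?_, ?_⟩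
      · ext A
        constructor
        · rintro (⟨h1, h2⟩ | ⟨h1, h2⟩) <;> exact h2
        · intro hAD
          have : A ∈ Dm' ∪ Dp' := by rw [hcut'.1]; exact Or.inl hAD
          rcases this with hm | hp
          · exact Or.inl ⟨hm, hAD⟩
          · exact Or.inr ⟨hp, hAD⟩
      · exact Set.disjoint_left.mpr fun {x} hx1 hx2 =>
          Set.disjoint_left.mp hcut'.2.1 hx1.1 hx2.1
      · intro A hA B hBD hsub
        exact ⟨hcut'.2.2 A hA.1 B (Or.inl hBD) hsub, hBD⟩
    have hloE := (hgends Dm Dp hcutD).1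
    have hhiE := (hgends Dm Dp hcutD).2.1
    have hloD' : cutLo Dm ∈ Dm' ∪ Dp' := by
      rw [hcut'.1]; exact Or.inr ⟨Dm, Dp, hcutD, hloE⟩
    have hhiD' : cutHi Dm Dp ∈ Dm' ∪ Dp' := by
      rw [hcut'.1]; exact Or.inr ⟨Dm, Dp, hcutD, hhiE⟩
    rcases hloD' with hlom | hlop
    · rcases hhiD' with hhim | hhip
      · -- case (b): hi ∈ Dm' : both intervals are empty
        have hIvsub : Iv Dm' Dp' ⊆ Iv Dm Dp := fun x hx =>
          ⟨fun A hA => hx.1 A hA.1, fun B hB => hx.2 B hB.1⟩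
        have hIv : Iv Dm' Dp' = ∅ := by
          ext x
          simp only [Set.mem_empty_iff_false, iff_false]
          intro hx
          exact absurd ((hx.1 _ hhim).1 (Or.inr ⟨x, hIvsub hx, le_refl x⟩)) (lt_irrefl x)
        have hJvsub : Jv h Dm' Dp' ⊆ Jv f Dm Dp := fun y hy =>
          ⟨fun A hA => by have := hy.1 A hA.1; rwa [hh1 A hA.2] at this,
           fun B hB => by have := hy.2 B hB.1; rwa [hh1 B hB.2] at this⟩
        have hJv : Jv h Dm' Dp' = ∅ := by
          ext y
          simp only [Set.mem_empty_iff_false, iff_false]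
          intro hy
          by_cases hhiD : cutHi Dm Dp ∈ D
          · have hhiDm : cutHi Dm Dp ∈ Dm := ⟨hhim, hhiD⟩
            have hIvDe : Iv Dm Dp = ∅ := by
              ext x
              simp only [Set.mem_empty_iff_false, iff_false]
              intro hx
              exact absurd ((hx.1 _ hhiDm).1 (Or.inr ⟨x, hx, le_refl x⟩)) (lt_irrefl x)
            have hJvfe : Jv f Dm Dp = ∅ := by
              by_contra hc
              have := hnerev Dm Dp hcutD (Set.nonempty_iff_ne_empty.mpr hc)
              rw [hIvDe] at this
              exact Set.not_nonempty_empty this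
            exact Set.notMem_empty y (hJvfe ▸ hJvsub hy)
          · have h2 := hy.1 _ hhim
            rw [hh2 Dm Dp hcutD _ hhiE hhiD,
              ghi_eq hf hE hgcore hgends hh1 hh2 hcutD] at h2
            exact absurd (h2.1 (Or.inr ⟨y, hJvsub hy, le_refl y⟩)) (lt_irrefl y)
        rw [hIv, hJv]
        exact strong_of_empty _ hpos rfl rfl α
      · -- main case (c): lo ∈ Dm', hi ∈ Dp'
        set DmE : Set (Set I) := Dm' ∩ E Dm Dp with hDmE_def
        set DpE : Set (Set I) := Dp' ∩ E Dm Dp with hDpE_def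
        have hcutE : IsCutOf DmE DpE (E Dm Dp) := by
          refine ⟨?_, ?_, ?_⟩
          · ext A
            constructor
            · rintro (⟨h1, h2⟩ | ⟨h1, h2⟩) <;> exact h2
            · intro hAE
              have : A ∈ Dm' ∪ Dp' := by
                rw [hcut'.1]; exact Or.inr ⟨Dm, Dp, hcutD, hAE⟩
              rcases this with hm | hp
              · exact Or.inl ⟨hm, hAE⟩
              · exact Or.inr ⟨hp, hAE⟩
          · exact Set.disjoint_left.mpr fun {x} hx1 hx2 =>
              Set.disjoint_left.mp hcut'.2.1 hx1.1 hx2.1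
          · intro A hA B hBE hsub
            exact ⟨hcut'.2.2 A hA.1 B
              (Or.inr ⟨Dm, Dp, hcutD, hBE⟩) hsub, hBE⟩
        have hloDmE : cutLo Dm ∈ DmE := ⟨hlom, hloE⟩
        have hhiDpE : cutHi Dm Dp ∈ DpE := ⟨hhip, hhiE⟩
        have hkeym : ∀ A ∈ Dm', A ∈ DmE ∨
            (A ⊆ cutLo Dm ∧ h A ⊆ g Dm Dp (cutLo Dm)) := by
          intro A hAm'
          by_cases hAE2 : A ∈ E Dm Dp
          · exact Or.inl ⟨hAm', hAE2⟩
          by_cases hAD : A ∈ D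
          · have hADm : A ∈ Dm := ⟨hAm', hAD⟩
            refine Or.inr ⟨fun t ht => ⟨A, hADm, ht⟩, ?_⟩
            rw [hh1 A hAD, glo_eq hf hE hgcore hgends hh1 hh2 hcutD]
            exact Set.subset_sUnion_of_mem ⟨A, hADm, rfl⟩
          · have hAD' : A ∈ D ∪ {A | ∃ Dm Dp : Set (Set I), IsCutOf Dm Dp D ∧ A ∈ E Dm Dp} :=
              by rw [← hcut'.1]; exact Or.inl hAm'
            obtain ⟨Dm₂, Dp₂, hcut₂, hAE₂⟩ := hAD'.resolve_left hAD
            by_cases hmeq : Dm₂ = Dm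
            · have hpeq : Dp₂ = Dp := by rw [cut_dp_eq hcut₂, cut_dp_eq hcutD, hmeq]
              rw [hmeq, hpeq] at hAE₂
              exact absurd hAE₂ hAE2
            · rcases cuts_total hD hcut₂ hcutD with hsub | hsub
              · obtain ⟨B, hBm, hBm₂⟩ := Set.exists_of_ssubset (hsub.ssubset_of_ne hmeq)
                have hBp₂ : B ∈ Dp₂ := by
                  rcases (hcut₂.1 ▸ cut_dm_subset hcutD hBm : B ∈ Dm₂ ∪ Dp₂) with hm | hp
                  · exact absurd hm hBm₂
                  · exact hp
                refine Or.inr ⟨fun t ht =>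
                  ⟨B, hBm, (hE Dm₂ Dp₂ hcut₂ A hAE₂).2.2 B hBp₂ ht⟩, ?_⟩
                rw [hh2 Dm₂ Dp₂ hcut₂ A hAE₂ hAD,
                  glo_eq hf hE hgcore hgends hh1 hh2 hcutD]
                calc g Dm₂ Dp₂ A ⊆ g Dm₂ Dp₂ (cutHi Dm₂ Dp₂) :=
                        (hgcore Dm₂ Dp₂ hcut₂).2.2.1 A hAE₂ _ (hgends Dm₂ Dp₂ hcut₂).2.1
                          (hE_le_hi hf hE hgcore hgends hh1 hh2 hcut₂ hAE₂)
                  _ = hiJset f Dm₂ Dp₂ := ghi_eq hf hE hgcore hgends hh1 hh2 hcut₂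
                  _ ⊆ f B := hiJ_subset_dp hf hcut₂ hBp₂
                  _ ⊆ ⋃₀ (f '' Dm) := Set.subset_sUnion_of_mem ⟨B, hBm, rfl⟩
              · obtain ⟨B, hBm₂, hBm⟩ := Set.exists_of_ssubset (hsub.ssubset_of_ne (Ne.symm hmeq))
                have hBp : B ∈ Dp := by
                  rcases (hcutD.1 ▸ cut_dm_subset hcut₂ hBm₂ : B ∈ Dm ∪ Dp) with hm | hp
                  · exact absurd hm hBm
                  · exact hp
                have hBA : B ⊆ A := (hE Dm₂ Dp₂ hcut₂ A hAE₂).2.1 B hBm₂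
                have hBm' : B ∈ Dm' :=
                  hcut'.2.2 A hAm' B (Or.inl (cut_dm_subset hcut₂ hBm₂)) hBA
                exact absurd hBm' fun hc => Set.disjoint_left.mp hcut'.2.1 hc hBp.1
        have hkeyp : ∀ B ∈ Dp', B ∈ DpE ∨
            (cutHi Dm Dp ⊆ B ∧ g Dm Dp (cutHi Dm Dp) ⊆ h B) := by
          intro B hBp'
          by_cases hBE2 : B ∈ E Dm Dp
          · exact Or.inl ⟨hBp', hBE2⟩
          by_cases hBD : B ∈ D
          · have hBDp : B ∈ Dp := ⟨hBp', hBD⟩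
            refine Or.inr ⟨hi_subset_dp hD hcutD hBDp, ?_⟩
            rw [ghi_eq hf hE hgcore hgends hh1 hh2 hcutD, hh1 B hBD]
            exact hiJ_subset_dp hf hcutD hBDp
          · have hBD' : B ∈ D ∪ {A | ∃ Dm Dp : Set (Set I), IsCutOf Dm Dp D ∧ A ∈ E Dm Dp} :=
              by rw [← hcut'.1]; exact Or.inr hBp'
            obtain ⟨Dm₂, Dp₂, hcut₂, hBE₂⟩ := hBD'.resolve_left hBD
            by_cases hmeq : Dm₂ = Dm
            · have hpeq : Dp₂ = Dp := by rw [cut_dp_eq hcut₂, cut_dp_eq hcutD, hmeq]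
              rw [hmeq, hpeq] at hBE₂
              exact absurd hBE₂ hBE2
            · rcases cuts_total hD hcutD hcut₂ with hsub | hsub
              · obtain ⟨C, hCm₂, hCm⟩ := Set.exists_of_ssubset (hsub.ssubset_of_ne (Ne.symm hmeq))
                have hCp : C ∈ Dp := by
                  rcases (hcutD.1 ▸ cut_dm_subset hcut₂ hCm₂ : C ∈ Dm ∪ Dp) with hm | hp
                  · exact absurd hm hCm
                  · exact hp
                refine Or.inr ⟨(hi_subset_dp hD hcutD hCp).trans
                  ((hE Dm₂ Dp₂ hcut₂ B hBE₂).2.1 C hCm₂), ?_⟩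
                rw [hh2 Dm₂ Dp₂ hcut₂ B hBE₂ hBD,
                  ghi_eq hf hE hgcore hgends hh1 hh2 hcutD]
                calc hiJset f Dm Dp ⊆ f C := hiJ_subset_dp hf hcutD hCp
                  _ ⊆ ⋃₀ (f '' Dm₂) := Set.subset_sUnion_of_mem ⟨C, hCm₂, rfl⟩
                  _ = g Dm₂ Dp₂ (cutLo Dm₂) := (glo_eq hf hE hgcore hgends hh1 hh2 hcut₂).symm
                  _ ⊆ g Dm₂ Dp₂ B := (hgcore Dm₂ Dp₂ hcut₂).2.2.1 _ (hgends Dm₂ Dp₂ hcut₂).1 B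
                        hBE₂ (lo_le_hE hf hE hgcore hgends hh1 hh2 hcut₂ hBE₂)
              · obtain ⟨C, hCm, hCm₂⟩ := Set.exists_of_ssubset (hsub.ssubset_of_ne hmeq)
                have hCp₂ : C ∈ Dp₂ := by
                  rcases (hcut₂.1 ▸ cut_dm_subset hcutD hCm : C ∈ Dm₂ ∪ Dp₂) with hm | hp
                  · exact absurd hm hCm₂
                  · exact hp
                have hBC : B ⊆ C := (hE Dm₂ Dp₂ hcut₂ B hBE₂).2.2 C hCp₂
                have hBm' : B ∈ Dm' := hcut'.2.2 C hCm.1 B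
                  (Or.inr ⟨Dm₂, Dp₂, hcut₂, hBE₂⟩) hBC
                exact absurd hBm' fun hc => Set.disjoint_left.mp hcut'.2.1 hc hBp'
        have hIv : Iv Dm' Dp' = Iv DmE DpE := by
          ext x
          constructor
          · intro hx
            exact ⟨fun A hA => hx.1 A hA.1, fun B hB => hx.2 B hB.1⟩
          · intro hx
            constructor
            · intro A hAm'
              rcases hkeym A hAm' with hAE | ⟨hsub, _⟩
              · exact hx.1 A hAE
              · exact sub_of_sub_ssub hsub (hx.1 _ hloDmE)
            · intro B hBp'
              rcases hkeyp B hBp' with hBE | ⟨hsub, _⟩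
              · exact hx.2 B hBE
              · exact ssub_of_ssub_sub (hx.2 _ hhiDpE) hsub
        have hJv : Jv h Dm' Dp' = Jv (g Dm Dp) DmE DpE := by
          ext y
          constructor
          · intro hy
            refine ⟨fun A hA => ?_, fun B hB => ?_⟩
            · rw [← hvalE hf hE hgcore hgends hh1 hh2 hcutD hA.2]
              exact hy.1 A hA.1
            · rw [← hvalE hf hE hgcore hgends hh1 hh2 hcutD hB.2]
              exact hy.2 B hB.1
          · intro hy
            constructor
            · intro A hAm'
              rcases hkeym A hAm' with hAE | ⟨_, hsub⟩
              · rw [hvalE hf hE hgcore hgends hh1 hh2 hcutD hAE.2]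
                exact hy.1 A hAE
              · exact sub_of_sub_ssub hsub (hy.1 _ hloDmE)
            · intro B hBp'
              rcases hkeyp B hBp' with hBE | ⟨_, hsub⟩
              · rw [hvalE hf hE hgcore hgends hh1 hh2 hcutD hBE.2]
                exact hy.2 B hBE
              · exact ssub_of_ssub_sub (hy.2 _ hhiDpE) hsub
        rw [hIv, hJv]
        exact hgstrong Dm Dp hcutD DmE DpE hcutE
    · -- case (a): lo ∈ Dp' : both intervals are empty
      have hIv : Iv Dm' Dp' = ∅ := by
        ext x
        simp only [Set.mem_empty_iff_false, iff_false]
        intro hx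
        have h1 : ⋃₀ Dm ⊆ Set.Iio x :=
          Set.sUnion_subset fun A hA => (hx.1 A hA.1).1
        exact absurd (ssub_of_ssub_sub (hx.2 (cutLo Dm) hlop) h1) (lt_irrefl _)
      have hJv : Jv h Dm' Dp' = ∅ := by
        ext y
        simp only [Set.mem_empty_iff_false, iff_false]
        intro hy
        have h1 : ⋃₀ (f '' Dm) ⊆ Set.Iio y := by
          apply Set.sUnion_subset
          rintro _ ⟨A, hA, rfl⟩
          have := hy.1 A hA.1
          rw [hh1 A hA.2] at this
          exact this.1
        have h2 := hy.2 _ hlop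
        by_cases hloD : cutLo Dm ∈ D
        · rw [hh1 _ hloD] at h2
          have hlub0 : IsLUB Dm (cutLo Dm) := by
            have : IsLUB Dm (sSup Dm) := isLUB_sSup Dm
            rwa [Set.sSup_eq_sUnion] at this
          have hflub := hf.1.2.2.2.2.1 Dm (fun A hA => hA.2) _ hloD hlub0
          have hub : Set.Iio y ∈ upperBounds (f '' Dm) := by
            rintro _ ⟨A, hA, rfl⟩
            exact fun t ht => h1 ⟨f A, ⟨A, hA, rfl⟩, ht⟩
          exact absurd (ssub_of_ssub_sub h2 (hflub.2 hub)) (lt_irrefl _)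
        · rw [hh2 Dm Dp hcutD _ hloE hloD,
            glo_eq hf hE hgcore hgends hh1 hh2 hcutD] at h2
          exact absurd (ssub_of_ssub_sub h2 h1) (lt_irrefl _)
      rw [hIv, hJv]
      exact strong_of_empty _ hpos rfl rfl α
end
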